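/- Let a ∈ [5/16, 5/14] and b = 5/(6a). Then for every ℓ ∈ {0, 1, 2, 3, 4, 5}, the 6a-periodizations of B_2 satisfy ∑_{n∈ℤ} [ B_2(6an + aℓ + 1/b) − B_2(6an + aℓ + 4/b) ] = v_ℓ, where (v_0, v_1, v_2, v_3, v_4, v_5) = (0, −2a, −2a, 0, 2a, 2a). -/

import Mathlib

open MeasureTheory Complex

noncomputable section

/-- The first B-spline `B₁ = χ_{[-1/2,1/2]}`. -/
def B1 : ℝ → ℝ := Set.indicator (Set.Icc (-(1:ℝ)/2) (1/2)) (fun _ => 1)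

/-- The B-splines: `Bspline 1 = B₁` and `Bspline (n+1) = Bspline n ∗ B₁` (convolution). -/
def Bspline : ℕ → ℝ → ℝ
  | 0 => fun _ => 0
  | 1 => B1
  | (n+2) => fun x => ∫ t : ℝ, Bspline (n+1) t * B1 (x - t)

/-- The cardinal B-spline `N n x = B n (x - n/2)`. -/
def cardN (n : ℕ) (x : ℝ) : ℝ := Bspline n (x - (n : ℝ)/2)

/-- `e t = exp(2πit)`. -/
def e (t : ℝ) : ℂ := Complex.exp (2 * Real.pi * Complex.I * t)

/-- The Gabor atom `g_{k,m}(x) = e^{2πibmx} g(x - ak)`. -/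
def gabor (g : ℝ → ℂ) (a b : ℝ) (k m : ℤ) : ℝ → ℂ :=
  fun x => e (b * (m : ℝ) * x) * g (x - a * (k : ℝ))

/-- The `L²(ℝ)` inner product `⟨f, g⟩ = ∫ conj (f x) * g x` (conjugate-linear in the first slot). -/
def inner2 (f g : ℝ → ℂ) : ℂ := ∫ x : ℝ, (starRingEnd ℂ) (f x) * g x

/-- The squared `L²(ℝ)` norm. -/
def normSq2 (f : ℝ → ℂ) : ℝ := ∫ x : ℝ, ‖f x‖^2

/-- The pointwise Zak transform `(Z_λ f)(x, ν) = √λ ∑_{k∈ℤ} f(λ(x-k)) e^{2πikν}`. -/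
def Zak (lam : ℝ) (f : ℝ → ℂ) (x ν : ℝ) : ℂ :=
  (Real.sqrt lam : ℂ) * ∑' k : ℤ, f (lam * (x - (k : ℝ))) * e ((k : ℝ) * ν)

/-!
`B₂` is the hat function `max (1 - |x|, 0)`, which vanishes outside `(-1, 1)`. As the period `6a` is
at least `1`, a point of `[0, 12a]` meets the support of `B₂(6an + ·)` only for `n ∈ {-2, -1, 0}`, so
each periodized sum is a sum of three hat values. For `5/16 ≤ a ≤ 5/14` the position of each of these
points relative to the kinks `-1, 0, 1` is fixed, so every hat value is linear in `a`; the endpoints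
are where `16a/5 = 1` and `14a/5 = 1`.
-/

lemma B1_sub_apply (x t : ℝ) :
    B1 (x - t) = (Set.Icc (x - 1/2) (x + 1/2)).indicator 1 t := by
  simp only [B1, Set.indicator_apply, Set.mem_Icc, Pi.one_apply]
  congr 1
  apply propext
  constructor <;> intro h <;> constructor <;> linarith [h.1, h.2]

lemma Bspline_two_apply (x : ℝ) : Bspline 2 x = max (1 - |x|) 0 := by
  have hprod : (fun t => B1 t * B1 (x - t))
      = (Set.Icc (-(1:ℝ)/2) (1/2) ∩ Set.Icc (x - 1/2) (x + 1/2)).indicator 1 := by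
    ext t
    rw [Set.inter_indicator_one, B1_sub_apply]
    rfl
  have hlen : min (1/2) (x + 1/2) - max (-(1:ℝ)/2) (x - 1/2) = 1 - |x| := by
    rcases le_total x 0 with hx | hx
    · rw [abs_of_nonpos hx, min_eq_right (by linarith), max_eq_left (by linarith)]; ring
    · rw [abs_of_nonneg hx, min_eq_left (by linarith), max_eq_right (by linarith)]; ring
  change ∫ t, B1 t * B1 (x - t) = _
  rw [hprod, integral_indicator_one (measurableSet_Icc.inter measurableSet_Icc), Set.Icc_inter_Icc,
    Real.volume_real_Icc, hlen]

lemma Bspline_two_eq_zero_of_one_le_abs {x : ℝ} (hx : 1 ≤ |x|) : Bspline 2 x = 0 := by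
  rw [Bspline_two_apply, max_eq_right (by linarith)]

lemma hasSum_periodization_of_mem_Icc {f : ℝ → ℝ} (hf : ∀ x, 1 ≤ |x| → f x = 0) {p : ℝ}
    (hp : 1 ≤ p) {x : ℝ} (hx₀ : 0 ≤ x) (hx : x ≤ 2 * p) :
    HasSum (fun n : ℤ => f (p * n + x)) (f (x - 2 * p) + f (x - p) + f x) := by
  have hvanish : ∀ n ∉ ({-2, -1, 0} : Finset ℤ), f (p * n + x) = 0 := by
    intro n hn
    simp only [Finset.mem_insert, Finset.mem_singleton, not_or] at hn
    apply hf
    rcases show 1 ≤ n ∨ n ≤ -3 by omega with hn | hn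
    · have : (1 : ℝ) ≤ n := by exact_mod_cast hn
      exact le_abs.2 (Or.inl (by nlinarith))
    · have : (n : ℝ) ≤ -3 := by exact_mod_cast hn
      exact le_abs.2 (Or.inr (by nlinarith))
  have hwindow :
      ∑ n ∈ ({-2, -1, 0} : Finset ℤ), f (p * n + x) = f (x - 2 * p) + f (x - p) + f x := by
    rw [Finset.sum_insert (by decide), Finset.sum_pair (by decide)]
    push_cast
    ring_nf
  exact hwindow ▸ hasSum_sum_of_ne_finset_zero hvanish

/-- the row difference `R₂ - R₅` computation in the proof of Theorem 3.8:
for `ab = 5/6`, `a ∈ [5/16, 5/14]`, the 6a-periodizations of `B₂` satisfy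
`∑_n (B₂(6an + aℓ + 1/b) - B₂(6an + aℓ + 4/b)) = (0, -2a, -2a, 0, 2a, 2a)_ℓ`. -/
theorem statement14 (a b : ℝ) (ha : a ∈ Set.Icc (5/16 : ℝ) (5/14)) (hb : b = 5 / (6 * a)) :
    ∀ ℓ : Fin 6,
      (∑' n : ℤ, (Bspline 2 (6 * a * (n : ℝ) + a * ((ℓ : ℕ) : ℝ) + 1 / b)
        - Bspline 2 (6 * a * (n : ℝ) + a * ((ℓ : ℕ) : ℝ) + 4 / b)))
      = ![0, -2*a, -2*a, 0, 2*a, 2*a] ℓ := by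
  obtain ⟨ha₁, ha₂⟩ := ha
  have hb₁ : 1 / b = 6 * a / 5 := by rw [hb]; field_simp
  have hb₄ : 4 / b = 24 * a / 5 := by rw [hb]; field_simp; ring
  have hsum := fun x => hasSum_periodization_of_mem_Icc (x := x)
    (fun _ => Bspline_two_eq_zero_of_one_le_abs) (show (1 : ℝ) ≤ 6 * a by linarith)
  intro ℓ
  have hℓ : ((ℓ : ℕ) : ℝ) ≤ 5 := by exact_mod_cast Nat.le_of_lt_succ ℓ.isLt
  simp only [add_assoc, hb₁, hb₄]
  rw [((hsum _ (by positivity) (by nlinarith)).sub (hsum _ (by positivity) (by nlinarith))).tsum_eq]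
  fin_cases ℓ <;> norm_num [Bspline_two_apply] <;>
    repeat (first | rw [abs_of_nonneg (by linarith)] | rw [abs_of_nonpos (by linarith)])
  all_goals
    repeat (first | rw [max_eq_left (by linarith)] | rw [max_eq_right (by linarith)])
  all_goals ring

end
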